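/- The naive rule-by-rule translation of closed free-variable tableaux into GS3 is unsound: there exists a closed free-variable tableau with unifier σ (namely one refuting ¬∃x (D(x) → ∀y D(y)) with σ = {X := c}) such that instantiating by σ and mapping each tableau rule to the corresponding GS3 rule in the same order produces a tree that is not a GS3 derivation, because a δ-rule's constant fails the freshness condition. -/

import Mathlib

/-- First-order terms: de Bruijn bound variables, free (meta)variables, function applications. -/
inductive Tm : Type
  | var : ℕ → Tm
  | mvar : ℕ → Tm
  | fn : ℕ → List Tm → Tm

/-- First-order formulas (de Bruijn representation for quantifiers). -/
inductive Fm : Type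
  | atom : ℕ → List Tm → Fm
  | neg : Fm → Fm
  | and : Fm → Fm → Fm
  | or : Fm → Fm → Fm
  | imp : Fm → Fm → Fm
  | all : Fm → Fm
  | ex : Fm → Fm

mutual
/-- Apply a substitution of metavariables to a term. -/
def substTm (σ : ℕ → Tm) : Tm → Tm
  | .var n => .var n
  | .mvar X => σ X
  | .fn f ts => .fn f (substTms σ ts)
def substTms (σ : ℕ → Tm) : List Tm → List Tm
  | [] => []
  | t :: ts => substTm σ t :: substTms σ ts
end

mutual
/-- Replace bound variable `k` by the term `u` (assumed closed), shifting down. -/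
def instTm (u : Tm) (k : ℕ) : Tm → Tm
  | .var n => if n = k then u else if k < n then .var (n - 1) else .var n
  | .mvar X => .mvar X
  | .fn f ts => .fn f (instTms u k ts)
def instTms (u : Tm) (k : ℕ) : List Tm → List Tm
  | [] => []
  | t :: ts => instTm u k t :: instTms u k ts
end

mutual
/-- Metavariables occurring in a term. -/
def mvarsTm : Tm → List ℕ
  | .var _ => []
  | .mvar X => [X]
  | .fn _ ts => mvarsTms ts
def mvarsTms : List Tm → List ℕ
  | [] => []
  | t :: ts => mvarsTm t ++ mvarsTms ts
end

def Fm.substF (σ : ℕ → Tm) : Fm → Fm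
  | .atom P ts => .atom P (substTms σ ts)
  | .neg A => .neg (A.substF σ)
  | .and A B => .and (A.substF σ) (B.substF σ)
  | .or A B => .or (A.substF σ) (B.substF σ)
  | .imp A B => .imp (A.substF σ) (B.substF σ)
  | .all A => .all (A.substF σ)
  | .ex A => .ex (A.substF σ)

def Fm.instF (u : Tm) (k : ℕ) : Fm → Fm
  | .atom P ts => .atom P (instTms u k ts)
  | .neg A => .neg (A.instF u k)
  | .and A B => .and (A.instF u k) (B.instF u k)
  | .or A B => .or (A.instF u k) (B.instF u k)
  | .imp A B => .imp (A.instF u k) (B.instF u k)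
  | .all A => .all (A.instF u (k + 1))
  | .ex A => .ex (A.instF u (k + 1))

/-- Instantiate the outermost bound variable of a quantified formula body. -/
def Fm.inst1 (u : Tm) (A : Fm) : Fm := A.instF u 0

def Fm.mvarsF : Fm → List ℕ
  | .atom _ ts => mvarsTms ts
  | .neg A => A.mvarsF
  | .and A B => A.mvarsF ++ B.mvarsF
  | .or A B => A.mvarsF ++ B.mvarsF
  | .imp A B => A.mvarsF ++ B.mvarsF
  | .all A => A.mvarsF
  | .ex A => A.mvarsF

/-- Occurrence of a subterm satisfying `P` inside a term. -/
inductive OccT (P : Tm → Prop) : Tm → Prop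
  | here {t} : P t → OccT P t
  | arg {f ts t} : t ∈ ts → OccT P t → OccT P (.fn f ts)

/-- Occurrence of a subterm satisfying `P` inside a formula. -/
inductive OccF (P : Tm → Prop) : Fm → Prop
  | atom {n ts t} : t ∈ ts → OccT P t → OccF P (.atom n ts)
  | neg {A} : OccF P A → OccF P (.neg A)
  | andL {A B} : OccF P A → OccF P (.and A B)
  | andR {A B} : OccF P B → OccF P (.and A B)
  | orL {A B} : OccF P A → OccF P (.or A B)
  | orR {A B} : OccF P B → OccF P (.or A B)
  | impL {A B} : OccF P A → OccF P (.imp A B)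
  | impR {A B} : OccF P B → OccF P (.imp A B)
  | all {A} : OccF P A → OccF P (.all A)
  | ex {A} : OccF P A → OccF P (.ex A)

/-- The function/constant symbol `c` occurs in the term. -/
def SymInTm (c : ℕ) : Tm → Prop := OccT (fun u => ∃ ts, u = .fn c ts)
/-- The function/constant symbol `c` occurs in the formula. -/
def SymInFm (c : ℕ) : Fm → Prop := OccF (fun u => ∃ ts, u = .fn c ts)
/-- The metavariable `X` occurs in the formula. -/
def MvarInFm (X : ℕ) : Fm → Prop := OccF (fun u => u = .mvar X)
/-- The term `u` occurs as a subterm in the formula. -/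
def TmInFm (u : Tm) : Fm → Prop := OccF (fun v => v = u)

/-- GS3: one-sided, cut-free sequent calculus with implicit contraction and
explicit weakening; `GS3 Δ` means the sequent `Δ ⊢` is derivable. -/
inductive GS3 : Multiset Fm → Prop
  | ax {Δ A} : A ∈ Δ → Fm.neg A ∈ Δ → GS3 Δ
  | weak {Δ A} : GS3 Δ → GS3 (A ::ₘ Δ)
  | andE {Δ A B} : Fm.and A B ∈ Δ → GS3 (A ::ₘ B ::ₘ Δ) → GS3 Δ
  | negOrE {Δ A B} : Fm.neg (Fm.or A B) ∈ Δ → GS3 (Fm.neg A ::ₘ Fm.neg B ::ₘ Δ) → GS3 Δ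
  | negImpE {Δ A B} : Fm.neg (Fm.imp A B) ∈ Δ → GS3 (A ::ₘ Fm.neg B ::ₘ Δ) → GS3 Δ
  | negNegE {Δ A} : Fm.neg (Fm.neg A) ∈ Δ → GS3 (A ::ₘ Δ) → GS3 Δ
  | orE {Δ A B} : Fm.or A B ∈ Δ → GS3 (A ::ₘ Δ) → GS3 (B ::ₘ Δ) → GS3 Δ
  | impE {Δ A B} : Fm.imp A B ∈ Δ → GS3 (Fm.neg A ::ₘ Δ) → GS3 (B ::ₘ Δ) → GS3 Δ
  | negAndE {Δ A B} : Fm.neg (Fm.and A B) ∈ Δ → GS3 (Fm.neg A ::ₘ Δ) → GS3 (Fm.neg B ::ₘ Δ) → GS3 Δ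
  | allE {Δ A} (t : Tm) : Fm.all A ∈ Δ → GS3 (Fm.inst1 t A ::ₘ Δ) → GS3 Δ
  | negExE {Δ A} (t : Tm) : Fm.neg (Fm.ex A) ∈ Δ → GS3 (Fm.neg (Fm.inst1 t A) ::ₘ Δ) → GS3 Δ
  | exE {Δ A} (c : ℕ) : Fm.ex A ∈ Δ → (∀ B ∈ Δ, ¬ SymInFm c B) →
      GS3 (Fm.inst1 (Tm.fn c []) A ::ₘ Δ) → GS3 Δ
  | negAllE {Δ A} (c : ℕ) : Fm.neg (Fm.all A) ∈ Δ → (∀ B ∈ Δ, ¬ SymInFm c B) →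
      GS3 (Fm.neg (Fm.inst1 (Tm.fn c []) A) ::ₘ Δ) → GS3 Δ
/-- A rule application label (shared between tableaux and GS3 proof-trees). -/
inductive RuleApp : Type
  | andR (A B : Fm) | negOrR (A B : Fm) | negImpR (A B : Fm) | negNegR (A : Fm)
  | orR (A B : Fm) | impR (A B : Fm) | negAndR (A B : Fm)
  | allR (A : Fm) (t : Tm) | negExR (A : Fm) (t : Tm)
  | exR (A : Fm) (t : Tm) | negAllR (A : Fm) (t : Tm)
  | closureR (A B : Fm)
  | weakR (Δ' : Multiset Fm)

/-- The premises (children multisets) generated by a rule applied to `Δ`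
(rules are non-destructive: the principal formula is kept). -/
def RuleApp.kids (Δ : Multiset Fm) : RuleApp → List (Multiset Fm)
  | .andR A B => [A ::ₘ B ::ₘ Δ]
  | .negOrR A B => [Fm.neg A ::ₘ Fm.neg B ::ₘ Δ]
  | .negImpR A B => [A ::ₘ Fm.neg B ::ₘ Δ]
  | .negNegR A => [A ::ₘ Δ]
  | .orR A B => [A ::ₘ Δ, B ::ₘ Δ]
  | .impR A B => [Fm.neg A ::ₘ Δ, B ::ₘ Δ]
  | .negAndR A B => [Fm.neg A ::ₘ Δ, Fm.neg B ::ₘ Δ]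
  | .allR A t => [Fm.inst1 t A ::ₘ Δ]
  | .negExR A t => [Fm.neg (Fm.inst1 t A) ::ₘ Δ]
  | .exR A t => [Fm.inst1 t A ::ₘ Δ]
  | .negAllR A t => [Fm.neg (Fm.inst1 t A) ::ₘ Δ]
  | .closureR _ _ => []
  | .weakR Δ' => [Δ']

def RuleApp.isClosure : RuleApp → Prop
  | .closureR _ _ => True
  | _ => False

def RuleApp.isAlpha : RuleApp → Prop
  | .andR _ _ | .negOrR _ _ | .negImpR _ _ | .negNegR _ => True
  | _ => False

def RuleApp.isBeta : RuleApp → Prop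
  | .orR _ _ | .impR _ _ | .negAndR _ _ => True
  | _ => False

def RuleApp.isDelta : RuleApp → Prop
  | .exR _ _ | .negAllR _ _ => True
  | _ => False

/-- Instantiation of a rule application by a substitution of metavariables. -/
def RuleApp.substR (σ : ℕ → Tm) : RuleApp → RuleApp
  | .andR A B => .andR (A.substF σ) (B.substF σ)
  | .negOrR A B => .negOrR (A.substF σ) (B.substF σ)
  | .negImpR A B => .negImpR (A.substF σ) (B.substF σ)
  | .negNegR A => .negNegR (A.substF σ)
  | .orR A B => .orR (A.substF σ) (B.substF σ)
  | .impR A B => .impR (A.substF σ) (B.substF σ)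
  | .negAndR A B => .negAndR (A.substF σ) (B.substF σ)
  | .allR A t => .allR (A.substF σ) (substTm σ t)
  | .negExR A t => .negExR (A.substF σ) (substTm σ t)
  | .exR A t => .exR (A.substF σ) (substTm σ t)
  | .negAllR A t => .negAllR (A.substF σ) (substTm σ t)
  | .closureR A B => .closureR (A.substF σ) (B.substF σ)
  | .weakR Δ' => .weakR (Δ'.map (Fm.substF σ))

/-- Trees of multisets of formulas: `leaf` is an *open* leaf; internal nodes are
labelled with the rule applied there (a `closureR` node with no children is a closed leaf). -/
inductive FTree : Type
  | leaf : Multiset Fm → FTree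
  | node : Multiset Fm → RuleApp → List FTree → FTree

def FTree.root : FTree → Multiset Fm
  | .leaf Δ => Δ
  | .node Δ _ _ => Δ

/-- The subtree at a path (children indexed by position). -/
def FTree.subAt (t : FTree) : List ℕ → Option FTree
  | [] => some t
  | i :: p =>
    match t with
    | .leaf _ => none
    | .node _ _ ts =>
      match ts[i]? with
      | some t' => t'.subAt p
      | none => none

/-- The multiset at an open leaf located at the given path, if any. -/
def FTree.openLeafAt (t : FTree) (p : List ℕ) : Option (Multiset Fm) :=
  match t.subAt p with
  | some (.leaf Δ) => some Δ
  | _ => none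

/-- The rule applied at the node located at the given path, if any. -/
def FTree.ruleAt (t : FTree) (p : List ℕ) : Option RuleApp :=
  match t.subAt p with
  | some (.node _ r _) => some r
  | _ => none

/-- A tree is closed when it has no open leaves. -/
def FTree.closedT (t : FTree) : Prop := ∀ p Δ, t.subAt p ≠ some (.leaf Δ)

/-- Extend a tree by applying rule `r` at the open leaf located at path `p`. -/
def FTree.extend (r : RuleApp) : List ℕ → FTree → FTree
  | [], .leaf Δ => .node Δ r ((r.kids Δ).map .leaf)
  | [], t => t
  | _ :: _, .leaf Δ => .leaf Δ
  | i :: p, .node Δ r' ts => .node Δ r' (ts.modify i (FTree.extend r p))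
  termination_by p _ => p.length

/-- Well-formed trees w.r.t. a side-condition `Ok` on rule applications:
children carry exactly the premises generated by the rule. -/
inductive WFT (Ok : Multiset Fm → RuleApp → Prop) : FTree → Prop
  | leaf {Δ} : WFT Ok (.leaf Δ)
  | node {Δ r ts} : Ok Δ r → ts.map FTree.root = r.kids Δ →
      (∀ t ∈ ts, WFT Ok t) → WFT Ok (.node Δ r ts)

/-- Side conditions of GS3: principal formula present, genuinely fresh
constants in δ-rules, arbitrary terms in γ-rules, axiom on `A, ¬A`. -/
def okGS3 : Multiset Fm → RuleApp → Prop
  | Δ, .andR A B => Fm.and A B ∈ Δ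
  | Δ, .negOrR A B => Fm.neg (Fm.or A B) ∈ Δ
  | Δ, .negImpR A B => Fm.neg (Fm.imp A B) ∈ Δ
  | Δ, .negNegR A => Fm.neg (Fm.neg A) ∈ Δ
  | Δ, .orR A B => Fm.or A B ∈ Δ
  | Δ, .impR A B => Fm.imp A B ∈ Δ
  | Δ, .negAndR A B => Fm.neg (Fm.and A B) ∈ Δ
  | Δ, .allR A _ => Fm.all A ∈ Δ
  | Δ, .negExR A _ => Fm.neg (Fm.ex A) ∈ Δ
  | Δ, .exR A t => Fm.ex A ∈ Δ ∧ ∃ c, t = Tm.fn c [] ∧ ∀ B ∈ Δ, ¬ SymInFm c B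
  | Δ, .negAllR A t => Fm.neg (Fm.all A) ∈ Δ ∧ ∃ c, t = Tm.fn c [] ∧ ∀ B ∈ Δ, ¬ SymInFm c B
  | Δ, .closureR A B => A ∈ Δ ∧ B ∈ Δ ∧ B = Fm.neg A
  | Δ, .weakR Δ' => Δ' ⊆ Δ

/-- Side conditions of free-variable tableaux with on-the-fly inner
Skolemization, relative to the global unifier `σ`: γ-rules use fresh
metavariables, δ-rules use a fresh Skolem symbol applied to the metavariables
of the Skolemized formula, closure needs the two formulas to be σ-opposite. -/
def okTabFV (σ : ℕ → Tm) : Multiset Fm → RuleApp → Prop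
  | Δ, .andR A B => Fm.and A B ∈ Δ
  | Δ, .negOrR A B => Fm.neg (Fm.or A B) ∈ Δ
  | Δ, .negImpR A B => Fm.neg (Fm.imp A B) ∈ Δ
  | Δ, .negNegR A => Fm.neg (Fm.neg A) ∈ Δ
  | Δ, .orR A B => Fm.or A B ∈ Δ
  | Δ, .impR A B => Fm.imp A B ∈ Δ
  | Δ, .negAndR A B => Fm.neg (Fm.and A B) ∈ Δ
  | Δ, .allR A t => Fm.all A ∈ Δ ∧ ∃ X, t = Tm.mvar X ∧ ∀ B ∈ Δ, ¬ MvarInFm X B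
  | Δ, .negExR A t => Fm.neg (Fm.ex A) ∈ Δ ∧ ∃ X, t = Tm.mvar X ∧ ∀ B ∈ Δ, ¬ MvarInFm X B
  | Δ, .exR A t => Fm.ex A ∈ Δ ∧
      ∃ f, t = Tm.fn f (((Fm.ex A).mvarsF.dedup).map Tm.mvar) ∧ ∀ B ∈ Δ, ¬ SymInFm f B
  | Δ, .negAllR A t => Fm.neg (Fm.all A) ∈ Δ ∧
      ∃ f, t = Tm.fn f (((Fm.neg (Fm.all A)).mvarsF.dedup).map Tm.mvar) ∧ ∀ B ∈ Δ, ¬ SymInFm f B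
  | Δ, .closureR A B => A ∈ Δ ∧ B ∈ Δ ∧ Fm.substF σ B = Fm.neg (Fm.substF σ A)
  | _, .weakR _ => False

/-- Initial part of a tree (same root and rules up to some open leaves;
a closed leaf of `T` may not be replaced by an open leaf). -/
inductive Initial : FTree → FTree → Prop
  | leafLeaf {Δ} : Initial (.leaf Δ) (.leaf Δ)
  | openLeaf {Δ r ts} : ¬ r.isClosure → Initial (.leaf Δ) (.node Δ r ts)
  | node {Δ r ts₀ ts} : ts₀.length = ts.length →
      (∀ (i : ℕ) t₀ t, ts₀[i]? = some t₀ → ts[i]? = some t → Initial t₀ t) →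
      Initial (.node Δ r ts₀) (.node Δ r ts)

/-- A (total) link from an open GS3 proof-tree `π` to a tableau `T` with
unifier `σ`: each open leaf of `π` is mapped to an open leaf of `T` whose
σ-instantiated formulas all appear in the sequent of the leaf of `π`. -/
structure Link (σ : ℕ → Tm) (π T : FTree) where
  μ : List ℕ → List ℕ
  maps : ∀ p Γs, π.openLeafAt p = some Γs →
    ∃ Δ, T.openLeafAt (μ p) = some Δ ∧ ∀ A ∈ Δ, Fm.substF σ A ∈ Γs

/-- A partial link between two GS3 proof-trees. -/
structure PLink (π θ : FTree) where
  μ : List ℕ → Option (List ℕ)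
  maps : ∀ p Γs q, π.openLeafAt p = some Γs → μ p = some q →
    ∃ Δ, θ.openLeafAt q = some Δ ∧ ∀ A ∈ Δ, A ∈ Γs

/-- A bilink: two partial links with disjoint domains covering all open leaves. -/
structure Bilink (π θ₀ θ₁ : FTree) where
  l0 : PLink π θ₀
  l1 : PLink π θ₁
  disj : ∀ p, (l0.μ p).isSome → (l1.μ p).isSome → False
  cover : ∀ p Γs, π.openLeafAt p = some Γs → (l0.μ p).isSome ∨ (l1.μ p).isSome

/-- A formula appearing somewhere in a tree. -/
inductive InTree (A : Fm) : FTree → Prop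
  | leaf {Δ} : A ∈ Δ → InTree A (.leaf Δ)
  | here {Δ r ts} : A ∈ Δ → InTree A (.node Δ r ts)
  | child {Δ r ts t} : t ∈ ts → InTree A t → InTree A (.node Δ r ts)

mutual
/-- Number of rule applications in a tree. -/
def FTree.ruleCount : FTree → ℕ
  | .leaf _ => 0
  | .node _ _ ts => 1 + ruleCountL ts
def ruleCountL : List FTree → ℕ
  | [] => 0
  | t :: ts => t.ruleCount + ruleCountL ts
end

mutual
/-- Instantiate all formulas of a tree by a substitution (the naive translation). -/
def FTree.substT (σ : ℕ → Tm) : FTree → FTree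
  | .leaf Δ => .leaf (Δ.map (Fm.substF σ))
  | .node Δ r ts => .node (Δ.map (Fm.substF σ)) (r.substR σ) (substTL σ ts)
def substTL (σ : ℕ → Tm) : List FTree → List FTree
  | [] => []
  | t :: ts => t.substT σ :: substTL σ ts
end

/-- The negated drinker formula `¬∃x (D(x) → ∀y D(y))` (with `D` the predicate
symbol `0`). -/
def negDrinker : Fm :=
  Fm.neg (Fm.ex (Fm.imp (Fm.atom 0 [Tm.var 0]) (Fm.all (Fm.atom 0 [Tm.var 0]))))

/-! The tableau refuting `¬∃x (D(x) → ∀y D(y))` applies γ with a metavariable `X`, α, δ with a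
Skolem constant `c`, and closes the branch on `D(X), ¬D(c)` with `σ = {X := c}`. The δ-step is
legal in the tableau because `c` is new there; but once `X := c` is substituted, `D(c)` already
stands in the sequent of that δ-step, so the GS3 `¬∀`-rule's eigenvariable condition fails. -/

namespace OccT

variable {P : Tm → Prop}

@[simp] theorem var_iff {n : ℕ} : OccT P (.var n) ↔ P (.var n) :=
  ⟨fun | .here h => h, .here⟩

@[simp] theorem mvar_iff {X : ℕ} : OccT P (.mvar X) ↔ P (.mvar X) :=
  ⟨fun | .here h => h, .here⟩

@[simp] theorem fn_iff {f : ℕ} {ts : List Tm} :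
    OccT P (.fn f ts) ↔ P (.fn f ts) ∨ ∃ t ∈ ts, OccT P t :=
  ⟨fun | .here h => .inl h | .arg ht h => .inr ⟨_, ht, h⟩,
   fun | .inl h => .here h | .inr ⟨_, ht, h⟩ => .arg ht h⟩

end OccT

namespace OccF

variable {P : Tm → Prop} {A B : Fm}

@[simp] theorem atom_iff {n : ℕ} {ts : List Tm} : OccF P (.atom n ts) ↔ ∃ t ∈ ts, OccT P t :=
  ⟨fun | .atom ht h => ⟨_, ht, h⟩, fun ⟨_, ht, h⟩ => .atom ht h⟩

@[simp] theorem neg_iff : OccF P (.neg A) ↔ OccF P A :=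
  ⟨fun | .neg h => h, .neg⟩

@[simp] theorem imp_iff : OccF P (.imp A B) ↔ OccF P A ∨ OccF P B :=
  ⟨fun | .impL h => .inl h | .impR h => .inr h, fun | .inl h => .impL h | .inr h => .impR h⟩

@[simp] theorem all_iff : OccF P (.all A) ↔ OccF P A :=
  ⟨fun | .all h => h, .all⟩

@[simp] theorem ex_iff : OccF P (.ex A) ↔ OccF P A :=
  ⟨fun | .ex h => h, .ex⟩

end OccF

theorem FTree.closedT_node {Δ : Multiset Fm} {r : RuleApp} {ts : List FTree}
    (h : ∀ t ∈ ts, t.closedT) : (FTree.node Δ r ts).closedT := by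
  rintro (_ | ⟨i, p⟩) Γ hp
  · simp [FTree.subAt] at hp
  · simp only [FTree.subAt] at hp
    split at hp
    · next t ht => exact h t (List.mem_of_getElem? ht) p Γ hp
    · simp at hp

theorem WFT.of_subAt {Ok : Multiset Fm → RuleApp → Prop} :
    ∀ {T : FTree} {p : List ℕ} {t : FTree}, WFT Ok T → T.subAt p = some t → WFT Ok t
  | _, [], _, hT, hp => by simp only [FTree.subAt, Option.some.injEq] at hp; exact hp ▸ hT
  | .leaf _, _ :: _, _, _, hp => by simp [FTree.subAt] at hp
  | .node _ _ ts, i :: p, t, .node _ _ hts, hp => by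
    simp only [FTree.subAt] at hp
    split at hp
    · next t' ht' => exact (hts t' (List.mem_of_getElem? ht')).of_subAt hp
    · simp at hp

theorem okGS3.fresh_of_delta {Δ : Multiset Fm} {r : RuleApp} {A : Fm} {c : ℕ}
    (hok : okGS3 Δ r) (hr : r = .exR A (.fn c []) ∨ r = .negAllR A (.fn c [])) :
    ∀ B ∈ Δ, ¬ SymInFm c B := by
  rcases hr with rfl | rfl <;>
  · obtain ⟨-, c', hc', hfresh⟩ := hok
    cases hc'
    exact hfresh

theorem not_wft_okGS3_of_stale_delta {T : FTree} {p : List ℕ} {Δ : Multiset Fm}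
    {r : RuleApp} {ts : List FTree} {A B : Fm} {c : ℕ}
    (hp : T.subAt p = some (.node Δ r ts))
    (hr : r = .exR A (.fn c []) ∨ r = .negAllR A (.fn c []))
    (hB : B ∈ Δ) (hc : SymInFm c B) : ¬ WFT okGS3 T := by
  intro hT
  cases hT.of_subAt hp with
  | node hok _ _ => exact hok.fresh_of_delta hr B hB hc

namespace DrinkerTableau

abbrev D (t : Tm) : Fm := .atom 0 [t]

def Γ₀ : Multiset Fm := {negDrinker}
def Γ₁ : Multiset Fm := .neg (.imp (D (.mvar 0)) (.all (D (.var 0)))) ::ₘ Γ₀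
def Γ₂ : Multiset Fm := D (.mvar 0) ::ₘ .neg (.all (D (.var 0))) ::ₘ Γ₁
def Γ₃ (c : ℕ) : Multiset Fm := .neg (D (.fn c [])) ::ₘ Γ₂

def tableau (c : ℕ) : FTree :=
  .node Γ₀ (.negExR (.imp (D (.var 0)) (.all (D (.var 0)))) (.mvar 0))
    [.node Γ₁ (.negImpR (D (.mvar 0)) (.all (D (.var 0))))
      [.node Γ₂ (.negAllR (D (.var 0)) (.fn c []))
        [.node (Γ₃ c) (.closureR (D (.mvar 0)) (.neg (D (.fn c [])))) []]]]

def unifier (c : ℕ) : ℕ → Tm := fun _ => .fn c []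

theorem wft_tableau (c : ℕ) : WFT (okTabFV (unifier c)) (tableau c) := by
  refine .node ?_ rfl fun t ht => ?_
  · simp [okTabFV, Γ₀, negDrinker, MvarInFm]
  obtain rfl := List.mem_singleton.1 ht
  refine .node (by simp [okTabFV, Γ₁]) rfl fun t ht => ?_
  obtain rfl := List.mem_singleton.1 ht
  refine .node ?_ rfl fun t ht => ?_
  · simp [okTabFV, Γ₂, Γ₁, Γ₀, negDrinker, SymInFm, Fm.mvarsF, mvarsTms, mvarsTm]
  obtain rfl := List.mem_singleton.1 ht
  exact .node (by simp [okTabFV, Γ₃, Γ₂]; rfl) rfl (by simp)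

theorem closedT_tableau (c : ℕ) : (tableau c).closedT := by
  unfold tableau
  repeat (apply FTree.closedT_node; simp only [List.mem_singleton, forall_eq, List.not_mem_nil,
    IsEmpty.forall_iff, implies_true])

theorem subAt_delta_substT_tableau (c : ℕ) :
    ∃ Δ ts, ((tableau c).substT (unifier c)).subAt [0, 0] =
      some (.node Δ (.negAllR (D (.var 0)) (.fn c [])) ts) ∧ D (.fn c []) ∈ Δ :=
  ⟨_, _, rfl, by simp [Γ₂, unifier, Fm.substF, substTms, substTm]⟩

end DrinkerTableau

/-- The naive rule-by-rule translation of closed free-variable tableaux into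
GS3 is unsound: there is a closed free-variable tableau with unifier `σ`,
refuting `¬∃x (D(x) → ∀y D(y))`, whose naive translation — instantiating
everything by `σ` and mapping each tableau rule to the GS3 rule of the same
name in the same order — is not a GS3 derivation, because some δ-rule node
introduces a constant that already occurs in its sequent, violating the GS3
freshness condition. -/
theorem naive_translation_unsound :
    ∃ (T : FTree) (σ : ℕ → Tm),
      WFT (okTabFV σ) T ∧ T.closedT ∧ T.root = {negDrinker} ∧
      ¬ WFT okGS3 (FTree.substT σ T) ∧
      ∃ (p : List ℕ) (Δ : Multiset Fm) (r : RuleApp) (ts : List FTree),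
        (FTree.substT σ T).subAt p = some (FTree.node Δ r ts) ∧ r.isDelta ∧
        ∃ A t, (r = RuleApp.exR A t ∨ r = RuleApp.negAllR A t) ∧
          ∃ c, t = Tm.fn c [] ∧ ∃ B ∈ Δ, SymInFm c B := by
  open DrinkerTableau in
  obtain ⟨Δ, ts, hδ, hDc⟩ := subAt_delta_substT_tableau 0
  have hc : SymInFm 0 (D (.fn 0 [])) := by simp [SymInFm]
  exact ⟨tableau 0, unifier 0, wft_tableau 0, closedT_tableau 0, rfl,
    not_wft_okGS3_of_stale_delta hδ (.inr rfl) hDc hc,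
    [0, 0], Δ, _, ts, hδ, trivial, _, _, .inr rfl, 0, rfl, _, hDc, hc⟩
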